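/- In a simply-laced triangle-free Coxeter system, if φ is a Fibonacci link of rank r ≥ 0, then the braid class [φ] contains exactly F_{r+2} reduced expressions, where F_n denotes the n-th Fibonacci number (F₁ = F₂ = 1, F_n = F_{n−1} + F_{n−2}). -/

import Mathlib

/-!
Every braid shadow of the class of a Fibonacci link `φ` of rank `r` is a shadow of `φ`
itself, so `φ` has shadows at the positions `0, 2, …, 2r - 2`; this forces
`φ = a b₀ a b₁ ⋯ b_{r-1} a` with `m(a, b_k) = 3`. The factor `a b_j a` can be braided to
`b_j a b_j` exactly when neither neighbouring factor has been braided (triangle-freeness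
excludes the one remaining overlap), so the words of the class correspond to the subsets of
`{0, …, r-1}` without two consecutive elements, of which there are `F_{r+2}`.
-/

open List

namespace BraidFormal

variable {B : Type*}

/-- A single braid move: replace a factor `s t s` with `t s t` where `m(s,t) = 3`. -/
def IsBraidMove (M : CoxeterMatrix B) (w w' : List B) : Prop :=
  ∃ (u v : List B) (s t : B), M s t = 3 ∧
    w = u ++ [s, t, s] ++ v ∧ w' = u ++ [t, s, t] ++ v

/-- Braid equivalence: the reflexive-transitive closure of braid moves. -/
def BraidEquiv (M : CoxeterMatrix B) : List B → List B → Prop :=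
  Relation.ReflTransGen (IsBraidMove M)

/-- The braid class of a word. -/
def BraidClass (M : CoxeterMatrix B) (α : List B) : Set (List B) :=
  {β | BraidEquiv M α β}

/-- `w` has a braid shadow at (0-based) positions `i, i+1, i+2`:
the letters there are `s, t, s` with `m(s,t) = 3`.
(This corresponds to the 1-based interval `⟦i+1, i+3⟧` of the paper.) -/
def HasShadowAt (M : CoxeterMatrix B) (w : List B) (i : ℕ) : Prop :=
  ∃ s t : B, M s t = 3 ∧ w[i]? = some s ∧ w[i+1]? = some t ∧ w[i+2]? = some s

/-- The braid class of `α` has a braid shadow at position `i`. -/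
def ClassHasShadowAt (M : CoxeterMatrix B) (α : List B) (i : ℕ) : Prop :=
  ∃ β ∈ BraidClass M α, HasShadowAt M β i

/-- The rank of a reduced expression: the number of braid shadows of its braid class. -/
noncomputable def rank (M : CoxeterMatrix B) (α : List B) : ℕ :=
  Set.ncard {i | ClassHasShadowAt M α i}

/-- A Coxeter matrix is simply laced if all entries are at most 3. -/
def SimplyLaced (M : CoxeterMatrix B) : Prop := ∀ s t : B, M s t ≤ 3

/-- A Coxeter matrix is triangle free if its Coxeter graph has no three-cycles
(all of whose edges are labelled 3). -/
def TriangleFree (M : CoxeterMatrix B) : Prop :=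
  ∀ s t u : B, s ≠ t → t ≠ u → s ≠ u → M s t = 3 → M t u = 3 → M s u ≠ 3

/-- The set of generators appearing in (0-based) position `k` of some word in the
braid class of `α`. -/
def classSupp (M : CoxeterMatrix B) (α : List B) (k : ℕ) : Set B :=
  {s | ∃ β ∈ BraidClass M α, β[k]? = some s}

/-- The set of generators appearing in (0-based) positions `i` through `j` of `w`. -/
def suppInterval (w : List B) (i j : ℕ) : Set B :=
  {s | ∃ k, i ≤ k ∧ k ≤ j ∧ w[k]? = some s}

variable {W : Type*} [Group W] {M : CoxeterMatrix B}

/-- `α` is a link of rank `r`: a reduced expression of length `2r+1` whose braid class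
has braid shadows exactly at the (0-based) positions `0, 2, 4, …, 2r-2`
(the 1-based intervals `⟦1,3⟧, ⟦3,5⟧, …, ⟦2r-1,2r+1⟧`). -/
def IsLink (cs : CoxeterSystem M W) (α : List B) (r : ℕ) : Prop :=
  cs.IsReduced α ∧ α.length = 2 * r + 1 ∧
    ∀ i : ℕ, ClassHasShadowAt M α i ↔ ∃ j < r, i = 2 * j

/-- A Fibonacci link: a link all of whose braid-class braid shadows are braid shadows
of the link itself. -/
def IsFibLink (cs : CoxeterSystem M W) (φ : List B) (r : ℕ) : Prop :=
  IsLink cs φ r ∧ ∀ i : ℕ, ClassHasShadowAt M φ i → HasShadowAt M φ i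

lemma eq_take_append_append_drop {w : List B} {i : ℕ} {s t u : B}
    (h0 : w[i]? = some s) (h1 : w[i+1]? = some t) (h2 : w[i+2]? = some u) :
    w = w.take i ++ [s, t, u] ++ w.drop (i + 3) := by
  obtain ⟨hi0, rfl⟩ := List.getElem?_eq_some_iff.mp h0
  obtain ⟨hi1, rfl⟩ := List.getElem?_eq_some_iff.mp h1
  obtain ⟨hi2, rfl⟩ := List.getElem?_eq_some_iff.mp h2
  conv_lhs => rw [← List.take_append_drop i w, List.drop_eq_getElem_cons hi0,
    List.drop_eq_getElem_cons hi1, List.drop_eq_getElem_cons hi2]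
  simp

def IsBraidMoveAt (M : CoxeterMatrix B) (x y : List B) (i : ℕ) : Prop :=
  ∃ s t : B, M s t = 3 ∧
    x[i]? = some s ∧ x[i+1]? = some t ∧ x[i+2]? = some s ∧
    y[i]? = some t ∧ y[i+1]? = some s ∧ y[i+2]? = some t ∧
    ∀ k, k < i ∨ i + 2 < k → x[k]? = y[k]?

namespace IsBraidMoveAt

variable {x y z : List B} {i : ℕ}

lemma symm (h : IsBraidMoveAt M x y i) : IsBraidMoveAt M y x i := by
  obtain ⟨s, t, hst, hx0, hx1, hx2, hy0, hy1, hy2, hxy⟩ := h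
  exact ⟨t, s, M.symmetric s t ▸ hst, hy0, hy1, hy2, hx0, hx1, hx2,
    fun k hk => (hxy k hk).symm⟩

lemma hasShadowAt (h : IsBraidMoveAt M x y i) : HasShadowAt M x i := by
  obtain ⟨s, t, hst, hx0, hx1, hx2, -⟩ := h
  exact ⟨s, t, hst, hx0, hx1, hx2⟩

lemma right_unique (hy : IsBraidMoveAt M x y i) (hz : IsBraidMoveAt M x z i) : y = z := by
  obtain ⟨s, t, -, hx0, hx1, -, hy0, hy1, hy2, hxy⟩ := hy
  obtain ⟨s', t', -, hx0', hx1', -, hz0, hz1, hz2, hxz⟩ := hz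
  obtain rfl : s = s' := Option.some.inj (hx0.symm.trans hx0')
  obtain rfl : t = t' := Option.some.inj (hx1.symm.trans hx1')
  refine List.ext_getElem? fun k => ?_
  rcases (by omega : k < i ∨ i + 2 < k ∨ k = i ∨ k = i + 1 ∨ k = i + 2) with
    hk | hk | rfl | rfl | rfl
  · rw [← hxy k (.inl hk), hxz k (.inl hk)]
  · rw [← hxy k (.inr hk), hxz k (.inr hk)]
  · rw [hy0, hz0]
  · rw [hy1, hz1]
  · rw [hy2, hz2]

end IsBraidMoveAt

lemma isBraidMove_iff_exists_isBraidMoveAt {x y : List B} :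
    IsBraidMove M x y ↔ ∃ i, IsBraidMoveAt M x y i := by
  constructor
  · rintro ⟨u, v, s, t, hst, rfl, rfl⟩
    refine ⟨u.length, s, t, hst, by simp, by simp, by simp, by simp, by simp, by simp,
      fun k hk => ?_⟩
    rcases hk with hk | hk
    · simp [List.getElem?_append, hk]
    · obtain ⟨m, hm⟩ : ∃ m, k - u.length = m + 3 := ⟨k - u.length - 3, by omega⟩
      simp [List.getElem?_append, show ¬ k < u.length by omega, hm]
  · rintro ⟨i, s, t, hst, hx0, hx1, hx2, hy0, hy1, hy2, hxy⟩
    refine ⟨x.take i, x.drop (i + 3), s, t, hst, eq_take_append_append_drop hx0 hx1 hx2, ?_⟩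
    have htake : y.take i = x.take i := List.ext_getElem? fun k => by
      simp only [List.getElem?_take]
      split_ifs with hk
      exacts [(hxy k (.inl hk)).symm, rfl]
    have hdrop : y.drop (i + 3) = x.drop (i + 3) := List.ext_getElem? fun k => by
      simp only [List.getElem?_drop]
      exact (hxy _ (.inr (by omega))).symm
    rw [← htake, ← hdrop]
    exact eq_take_append_append_drop hy0 hy1 hy2

def nonAdjacentSubsets (r : ℕ) : Finset (Finset ℕ) :=
  (Finset.range r).powerset.filter fun S => ∀ j ∈ S, j + 1 ∉ S

lemma mem_nonAdjacentSubsets {r : ℕ} {S : Finset ℕ} :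
    S ∈ nonAdjacentSubsets r ↔ (∀ j ∈ S, j < r) ∧ ∀ j ∈ S, j + 1 ∉ S := by
  simp [nonAdjacentSubsets, Finset.subset_iff]

lemma erase_mem_nonAdjacentSubsets {r : ℕ} {S : Finset ℕ} (hS : S ∈ nonAdjacentSubsets r)
    (j : ℕ) : S.erase j ∈ nonAdjacentSubsets r := by
  rw [mem_nonAdjacentSubsets] at hS ⊢
  exact ⟨fun m hm => hS.1 m (Finset.mem_of_mem_erase hm),
    fun m hm hm' => hS.2 m (Finset.mem_of_mem_erase hm) (Finset.mem_of_mem_erase hm')⟩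

lemma insert_mem_nonAdjacentSubsets {r : ℕ} {S : Finset ℕ} (hS : S ∈ nonAdjacentSubsets r)
    {j : ℕ} (hj : j < r) (hprev : ∀ i ∈ S, i + 1 ≠ j) (hnext : j + 1 ∉ S) :
    insert j S ∈ nonAdjacentSubsets r := by
  rw [mem_nonAdjacentSubsets] at hS ⊢
  refine ⟨by simpa [hj] using hS.1, ?_⟩
  simp only [Finset.mem_insert, forall_eq_or_imp, not_or]
  exact ⟨⟨by omega, hnext⟩, fun i hi => ⟨hprev i hi, hS.2 i hi⟩⟩

lemma nonAdjacentSubsets_filter_notMem (n : ℕ) :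
    (nonAdjacentSubsets (n + 2)).filter (n + 1 ∉ ·) = nonAdjacentSubsets (n + 1) := by
  ext S
  simp only [Finset.mem_filter, mem_nonAdjacentSubsets]
  constructor
  · rintro ⟨⟨hlt, hS⟩, hn⟩
    exact ⟨fun j hj => lt_of_le_of_ne (Nat.le_of_lt_succ (hlt j hj))
      (fun h => hn (h ▸ hj)), hS⟩
  · rintro ⟨hlt, hS⟩
    exact ⟨⟨fun j hj => (hlt j hj).trans (Nat.lt_succ_self _), hS⟩,
      fun h => (hlt _ h).false⟩

lemma card_nonAdjacentSubsets_filter_mem (n : ℕ) :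
    ((nonAdjacentSubsets (n + 2)).filter (n + 1 ∈ ·)).card = (nonAdjacentSubsets n).card := by
  refine Finset.card_nbij' (·.erase (n + 1)) (insert (n + 1)) ?_ ?_ ?_ ?_
  · intro S hS
    simp only [Finset.coe_filter, Set.mem_ofPred_eq, mem_nonAdjacentSubsets] at hS
    simp only [Finset.mem_coe, mem_nonAdjacentSubsets, Finset.mem_erase]
    obtain ⟨⟨hlt, hS⟩, hn⟩ := hS
    refine ⟨fun j hj => ?_, fun j hj h => hS j hj.2 h.2⟩
    have hjlt := hlt j hj.2
    have hjn : j ≠ n := fun h => hS j hj.2 (by rwa [h])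
    omega
  · intro S hS
    simp only [Finset.mem_coe, mem_nonAdjacentSubsets] at hS
    simp only [Finset.coe_filter, Set.mem_ofPred_eq, Finset.mem_insert_self, and_true]
    refine insert_mem_nonAdjacentSubsets ?_ (by omega) ?_ ?_
    · rw [mem_nonAdjacentSubsets]
      exact ⟨fun j hj => (hS.1 j hj).trans (by omega), hS.2⟩
    · intro i hi h
      exact absurd (hS.1 i hi) (by omega)
    · exact fun h => absurd (hS.1 _ h) (by omega)
  · intro S hS
    simp only [Finset.coe_filter, Set.mem_ofPred_eq] at hS
    exact Finset.insert_erase hS.2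
  · intro S hS
    simp only [Finset.mem_coe, mem_nonAdjacentSubsets] at hS
    exact Finset.erase_insert fun h => absurd (hS.1 _ h) (by omega)

lemma card_nonAdjacentSubsets (r : ℕ) : (nonAdjacentSubsets r).card = Nat.fib (r + 2) := by
  induction r using Nat.strong_induction_on with
  | _ r ih =>
    match r with
    | 0 => decide
    | 1 => decide
    | n + 2 =>
      rw [← Finset.card_filter_add_card_filter_not (n + 1 ∈ ·),
        card_nonAdjacentSubsets_filter_mem, nonAdjacentSubsets_filter_notMem,
        ih n (by omega), ih (n + 1) (by omega), Nat.fib_add_two (n := n + 2), add_comm]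

lemma ne_of_coxeterMatrix_eq_three {s t : B} (h : M s t = 3) : s ≠ t := by
  rintro rfl
  rw [M.diagonal] at h
  exact absurd h (by decide)

section FibWord

variable (a : B) (b : ℕ → B)

/- `fibWord a b r ∅` is the alternating word `a b₀ a b₁ ⋯ a b_{r-1} a`; `fibWord a b r S`
replaces the factor `a b_j a` at positions `2j, 2j+1, 2j+2` by `b_j a b_j` for every `j ∈ S`. For
non-adjacent `S` these factors are disjoint. -/
def fibLetter (S : Finset ℕ) (n : ℕ) : B :=
  if n % 2 = 1 then (if n / 2 ∈ S then a else b (n / 2))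
  else if n / 2 ∈ S then b (n / 2)
  else if n / 2 ≠ 0 ∧ n / 2 - 1 ∈ S then b (n / 2 - 1)
  else a

def fibWord (r : ℕ) (S : Finset ℕ) : List B :=
  (List.range (2 * r + 1)).map (fibLetter a b S)

variable {a b} {S T : Finset ℕ} {r : ℕ}

lemma fibLetter_two_mul_add_one (k : ℕ) :
    fibLetter a b S (2 * k + 1) = if k ∈ S then a else b k := by
  simp [fibLetter, Nat.add_mod, Nat.add_div]

lemma fibLetter_two_mul (k : ℕ) :
    fibLetter a b S (2 * k) =
      if k ∈ S then b k else if k ≠ 0 ∧ k - 1 ∈ S then b (k - 1) else a := by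
  simp [fibLetter]

lemma fibLetter_two_mul_add_two (k : ℕ) :
    fibLetter a b S (2 * k + 2) =
      if k + 1 ∈ S then b (k + 1) else if k ∈ S then b k else a := by
  rw [show 2 * k + 2 = 2 * (k + 1) by ring, fibLetter_two_mul]
  simp

lemma fibLetter_congr {j n : ℕ} (hST : ∀ m, m ≠ j → (m ∈ S ↔ m ∈ T))
    (hn : n < 2 * j ∨ 2 * j + 2 < n) :
    fibLetter a b S n = fibLetter a b T n := by
  obtain ⟨k, rfl | rfl⟩ : ∃ k, n = 2 * k ∨ n = 2 * k + 1 := ⟨n / 2, by omega⟩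
  · simp only [fibLetter_two_mul, hST k (by omega), hST (k - 1) (by omega)]
  · simp only [fibLetter_two_mul_add_one, hST k (by omega)]

lemma getElem?_fibWord (n : ℕ) :
    (fibWord a b r S)[n]? = if n < 2 * r + 1 then some (fibLetter a b S n) else none := by
  split_ifs with hn
  · simp [fibWord, hn]
  · simp [fibWord]
    omega

lemma getElem?_fibWord_of_lt {n : ℕ} (hn : n < 2 * r + 1) :
    (fibWord a b r S)[n]? = some (fibLetter a b S n) := by
  rw [getElem?_fibWord, if_pos hn]

lemma isBraidMoveAt_fibWord_erase {j : ℕ} (hab : M a (b j) = 3)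
    (hS : S ∈ nonAdjacentSubsets r) (hj : j ∈ S) :
    IsBraidMoveAt M (fibWord a b r (S.erase j)) (fibWord a b r S) (2 * j) := by
  obtain ⟨hlt, hS⟩ := mem_nonAdjacentSubsets.mp hS
  have hjr := hlt j hj
  have hprev : ¬(j ≠ 0 ∧ j - 1 ∈ S) := fun ⟨h0, h⟩ =>
    hS _ h (by rwa [Nat.sub_add_cancel (by omega)])
  have hnext : j + 1 ∉ S := hS j hj
  refine ⟨a, b j, hab, ?_, ?_, ?_, ?_, ?_, ?_, fun k hk => ?_⟩
  all_goals first
    | rw [getElem?_fibWord, getElem?_fibWord]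
    | rw [getElem?_fibWord_of_lt (by omega)]
  · rw [fibLetter_two_mul, if_neg (by simp),
      if_neg fun h => hprev ⟨h.1, Finset.mem_of_mem_erase h.2⟩]
  · simp [fibLetter_two_mul_add_one]
  · simp [fibLetter_two_mul_add_two, hnext]
  · simp [fibLetter_two_mul, hj]
  · simp [fibLetter_two_mul_add_one, hj]
  · simp [fibLetter_two_mul_add_two, hnext, hj]
  · split_ifs
    · rw [fibLetter_congr (S := S.erase j) (T := S) (fun m hm => by simp [hm]) hk]
    · rfl

lemma neighbours_not_mem_of_hasShadowAt_fibWord (htf : TriangleFree M)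
    (hab : ∀ k < r, M a (b k) = 3) (hS : S ∈ nonAdjacentSubsets r) {j : ℕ} (hjS : j ∉ S)
    (hj : j < r) (hsh : HasShadowAt M (fibWord a b r S) (2 * j)) :
    (∀ i ∈ S, i + 1 ≠ j) ∧ j + 1 ∉ S := by
  obtain ⟨hlt, -⟩ := mem_nonAdjacentSubsets.mp hS
  obtain ⟨s, t, hst, h0, h1, h2⟩ := hsh
  rw [getElem?_fibWord_of_lt (by omega), fibLetter_two_mul, if_neg hjS, Option.some_inj] at h0
  rw [getElem?_fibWord_of_lt (by omega), fibLetter_two_mul_add_one, if_neg hjS,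
    Option.some_inj] at h1
  rw [getElem?_fibWord_of_lt (by omega), fibLetter_two_mul_add_two, if_neg hjS,
    Option.some_inj] at h2
  subst h1
  have hne : ∀ k < r, a ≠ b k := fun k hk => ne_of_coxeterMatrix_eq_three (hab k hk)
  by_cases hprev : j ≠ 0 ∧ j - 1 ∈ S
  · rw [if_pos hprev] at h0
    subst h0
    by_cases hnext : j + 1 ∈ S
    · -- `a`, `b (j - 1) = b (j + 1)` and `b j` would form a triangle
      rw [if_pos hnext] at h2
      have has := hab (j - 1) (hlt _ hprev.2)
      exact absurd (hab j hj) (htf a _ (b j) (hne _ (hlt _ hprev.2))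
        (ne_of_coxeterMatrix_eq_three hst) (hne j hj) has hst)
    · rw [if_neg hnext] at h2
      exact absurd h2 (hne _ (hlt _ hprev.2))
  · rw [if_neg hprev] at h0
    subst h0
    by_cases hnext : j + 1 ∈ S
    · rw [if_pos hnext] at h2
      exact absurd h2.symm (hne _ (hlt _ hnext))
    · exact ⟨fun i hi h => hprev ⟨by omega, by rwa [show j - 1 = i by omega]⟩, hnext⟩

lemma exists_eq_fibWord_of_isBraidMoveAt (htf : TriangleFree M)
    (hab : ∀ k < r, M a (b k) = 3) (hS : S ∈ nonAdjacentSubsets r) {j : ℕ} (hj : j < r)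
    {y : List B} (hy : IsBraidMoveAt M (fibWord a b r S) y (2 * j)) :
    ∃ T ∈ nonAdjacentSubsets r, fibWord a b r T = y := by
  by_cases hjS : j ∈ S
  · exact ⟨S.erase j, erase_mem_nonAdjacentSubsets hS j,
      (hy.right_unique (isBraidMoveAt_fibWord_erase (hab j hj) hS hjS).symm).symm⟩
  · obtain ⟨hprev, hnext⟩ :=
      neighbours_not_mem_of_hasShadowAt_fibWord htf hab hS hjS hj hy.hasShadowAt
    have hT := insert_mem_nonAdjacentSubsets hS hj hprev hnext
    refine ⟨insert j S, hT, (hy.right_unique ?_).symm⟩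
    simpa [Finset.erase_insert hjS] using
      isBraidMoveAt_fibWord_erase (hab j hj) hT (Finset.mem_insert_self j S)

lemma braidEquiv_fibWord_empty (hab : ∀ k < r, M a (b k) = 3)
    (hS : S ∈ nonAdjacentSubsets r) : BraidEquiv M (fibWord a b r ∅) (fibWord a b r S) := by
  induction S using Finset.strongInduction with
  | H S ih =>
    obtain rfl | ⟨j, hj⟩ := S.eq_empty_or_nonempty
    · exact .refl
    · have hjr := (mem_nonAdjacentSubsets.mp hS).1 j hj
      exact (ih _ (Finset.erase_ssubset hj) (erase_mem_nonAdjacentSubsets hS j)).tail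
        (isBraidMove_iff_exists_isBraidMoveAt.mpr
          ⟨2 * j, isBraidMoveAt_fibWord_erase (hab j hjr) hS hj⟩)

lemma braidClass_fibWord_empty [DecidableEq B] (htf : TriangleFree M)
    (hab : ∀ k < r, M a (b k) = 3)
    (hshadow : ∀ i, ClassHasShadowAt M (fibWord a b r ∅) i → ∃ j < r, i = 2 * j) :
    BraidClass M (fibWord a b r ∅) = (nonAdjacentSubsets r).image (fibWord a b r) := by
  ext β
  simp only [Finset.coe_image, Set.mem_image, Finset.mem_coe]
  constructor
  · intro hβ
    induction hβ with
    | refl => exact ⟨∅, by simp [mem_nonAdjacentSubsets], rfl⟩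
    | tail hreach hmove ih =>
      obtain ⟨S, hS, rfl⟩ := ih
      obtain ⟨i, hi⟩ := isBraidMove_iff_exists_isBraidMoveAt.mp hmove
      obtain ⟨j, hj, rfl⟩ := hshadow i ⟨_, hreach, hi.hasShadowAt⟩
      exact exists_eq_fibWord_of_isBraidMoveAt htf hab hS hj hi
  · rintro ⟨S, hS, rfl⟩
    exact braidEquiv_fibWord_empty hab hS

lemma fibWord_injOn (hab : ∀ k < r, a ≠ b k) :
    Set.InjOn (fibWord a b r) (nonAdjacentSubsets r) := by
  have key : ∀ U ∈ nonAdjacentSubsets r, ∀ j,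
      j ∈ U ↔ j < r ∧ (fibWord a b r U)[2 * j + 1]? = some a := by
    intro U hU j
    by_cases hj : j < r
    · rw [getElem?_fibWord_of_lt (by omega), fibLetter_two_mul_add_one]
      by_cases hjU : j ∈ U <;> simp [hjU, hj, (hab j hj).symm]
    · exact ⟨fun h => absurd ((mem_nonAdjacentSubsets.mp hU).1 j h) hj, fun h => absurd h.1 hj⟩
  intro S hS T hT hST
  ext j
  rw [key S hS, key T hT, hST]

end FibWord

lemma exists_eq_fibWord {w : List B} {r : ℕ} (hlen : w.length = 2 * r + 1)
    (hsh : ∀ j < r, HasShadowAt M w (2 * j)) :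
    ∃ (a : B) (b : ℕ → B), (∀ k < r, M a (b k) = 3) ∧ w = fibWord a b r ∅ := by
  have hw : 0 < w.length := by omega
  set a := w[0]
  set b : ℕ → B := fun k => w.getD (2 * k + 1) a
  have heven : ∀ k ≤ r, w[2 * k]? = some a := by
    intro k hk
    induction k with
    | zero => exact List.getElem?_eq_getElem hw
    | succ k ih =>
      obtain ⟨s, t, -, h0, -, h2⟩ := hsh k (by omega)
      rw [show 2 * (k + 1) = 2 * k + 2 by ring, h2, ← h0, ih (by omega)]
  have hodd : ∀ k < r, w[2 * k + 1]? = some (b k) := by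
    intro k hk
    simp [b, List.getD_eq_getElem?_getD,
      List.getElem?_eq_getElem (show 2 * k + 1 < w.length by omega)]
  refine ⟨a, b, fun k hk => ?_, List.ext_getElem? fun n => ?_⟩
  · obtain ⟨s, t, hst, h0, h1, -⟩ := hsh k hk
    rwa [Option.some_inj.mp (h0.symm.trans (heven k hk.le)),
      Option.some_inj.mp (h1.symm.trans (hodd k hk))] at hst
  · rw [getElem?_fibWord]
    split_ifs with hn
    · obtain ⟨k, rfl | rfl⟩ : ∃ k, n = 2 * k ∨ n = 2 * k + 1 := ⟨n / 2, by omega⟩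
      · simpa [fibLetter_two_mul] using heven k (by omega)
      · simpa [fibLetter_two_mul_add_one] using hodd k (by omega)
    · exact List.getElem?_eq_none (by omega)

theorem statement_16_general {B W : Type*} [Group W] {M : CoxeterMatrix B}
    (cs : CoxeterSystem M W) (htf : TriangleFree M)
    (φ : List B) (r : ℕ) (hfib : IsFibLink cs φ r) :
    (BraidClass M φ).ncard = Nat.fib (r + 2) := by
  classical
  obtain ⟨⟨-, hlen, hshadow⟩, hfib⟩ := hfib
  obtain ⟨a, b, hab, rfl⟩ :=
    exists_eq_fibWord hlen fun j hj => hfib _ ((hshadow _).mpr ⟨j, hj, rfl⟩)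
  rw [braidClass_fibWord_empty htf hab fun i => (hshadow i).mp, Set.ncard_coe_finset,
    Finset.card_image_of_injOn (fibWord_injOn fun k hk => ne_of_coxeterMatrix_eq_three (hab k hk)),
    card_nonAdjacentSubsets]

/-- the braid class of a Fibonacci link of rank `r` has exactly
`F_{r+2}` elements. -/
theorem statement_16 {B W : Type*} [Group W] {M : CoxeterMatrix B}
    (cs : CoxeterSystem M W) (hsl : SimplyLaced M) (htf : TriangleFree M)
    (φ : List B) (r : ℕ) (hfib : IsFibLink cs φ r) :
    (BraidClass M φ).ncard = Nat.fib (r + 2) :=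
  statement_16_general cs htf φ r hfib

end BraidFormal
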